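/- arXiv:1103.3881 — 2 statements merged into one kernel-verified Lean document; each statement's English description precedes it below -/
import Mathlib

section
/- The Levi-Civita transformation q = 2v², p = u/v̄ (for v ≠ 0) is symplectic up to a factor 4: the pullback of the real part of dq ∧ dp̄ equals 4 times the real part of dv ∧ dū. -/
/-!
The derivative of the Levi-Civita map at `(v, u)` is `(a, b) ↦ (4v a, b / v̄ - u ā / v̄²)`.
A real-linear map `(a, b) ↦ (c a, (k / c̄) b + d ā)` with `k` real multiplies
`Re(a₁ b̄₂ - a₂ b̄₁)` by `k`: the `d`-terms contribute `c d̄ a₁ a₂`, which is symmetric in the two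
vectors and cancels. For the Levi-Civita map `c = 4v` while `1 / v̄ = 4 / c̄`, whence the factor 4.
-/

open Complex

/-- The Levi-Civita map `(v,u) ↦ (q,p) = (2v², u/v̄)`. -/
noncomputable def leviCivita : ℂ × ℂ → ℂ × ℂ :=
  fun w => (2 * w.1 ^ 2, w.2 / (starRingEnd ℂ) w.1)

/-- The standard symplectic form `Re(dq ∧ dp̄) = dq₁∧dp₁ + dq₂∧dp₂` on `ℂ²`,
evaluated on a pair of tangent vectors `(q̂,p̂)`, `(q̂',p̂')`. -/
noncomputable def omegaStd : ℂ × ℂ → ℂ × ℂ → ℝ :=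
  fun a b => (a.1 * (starRingEnd ℂ) b.2 - b.1 * (starRingEnd ℂ) a.2).re

open ComplexConjugate ContinuousLinearMap

theorem omegaStd_map_scaled {c : ℂ} (hc : c ≠ 0) (k : ℝ) (d : ℂ) (w₁ w₂ : ℂ × ℂ) :
    omegaStd (c * w₁.1, k / conj c * w₁.2 + d * conj w₁.1)
      (c * w₂.1, k / conj c * w₂.2 + d * conj w₂.1) = k * omegaStd w₁ w₂ := by
  unfold omegaStd
  rw [← re_ofReal_mul]
  congr 1
  simp only [map_add, map_mul, map_div₀, conj_conj, conj_ofReal]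
  field_simp
  ring

theorem hasFDerivAt_inv_conj_fst {p : ℂ × ℂ} (hp : p.1 ≠ 0) :
    HasFDerivAt (fun w : ℂ × ℂ => (conj w.1)⁻¹)
      (-(conj p.1 ^ 2)⁻¹ • (conjCLE : ℂ →L[ℝ] ℂ).comp (fst ℝ ℂ ℂ)) p :=
  (((hasDerivAt_inv ((map_ne_zero (starRingEnd ℂ)).2 hp)).hasFDerivAt.restrictScalars ℝ).comp
    p ((conjCLE : ℂ →L[ℝ] ℂ).hasFDerivAt.comp p hasFDerivAt_fst)).congr_fderiv
    (by ext w <;> simp [mul_comm])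

theorem hasFDerivAt_leviCivita {v : ℂ} (hv : v ≠ 0) (u : ℂ) :
    HasFDerivAt leviCivita
      (((4 * v) • fst ℝ ℂ ℂ).prod ((conj v)⁻¹ • snd ℝ ℂ ℂ
        - (u / conj v ^ 2) • (conjCLE : ℂ →L[ℝ] ℂ).comp (fst ℝ ℂ ℂ))) (v, u) := by
  refine HasFDerivAt.prodMk ?_ ?_
  · have h : HasFDerivAt (fun w : ℂ × ℂ => 2 * w.1 ^ 2) _ (v, u) :=
      ((hasFDerivAt_fst (𝕜 := ℝ)).pow 2).const_mul (2 : ℂ)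
    refine h.congr_fderiv ?_
    ext w <;> simp
    ring
  · have h : HasFDerivAt (fun w : ℂ × ℂ => w.2 * (conj w.1)⁻¹) _ (v, u) :=
      hasFDerivAt_snd.mul (hasFDerivAt_inv_conj_fst (p := (v, u)) hv)
    refine h.congr_fderiv ?_
    ext w <;> simp
    ring

/-- The Levi-Civita transformation is symplectic up to a factor 4:
the pullback of `Re(dq ∧ dp̄)` equals `4 Re(dv ∧ dū)`. -/
theorem leviCivita_symplectic_up_to_factor_four (v u : ℂ) (hv : v ≠ 0)
    (w₁ w₂ : ℂ × ℂ) :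
    omegaStd (fderiv ℝ leviCivita (v, u) w₁) (fderiv ℝ leviCivita (v, u) w₂)
      = 4 * omegaStd w₁ w₂ := by
  have h4v : 4 * v ≠ 0 := mul_ne_zero (by norm_num) hv
  have hp : (conj v)⁻¹ = ((4 : ℝ) : ℂ) / conj (4 * v) := by
    rw [map_mul, map_ofNat, ofReal_ofNat, div_mul_eq_div_div, div_self (by norm_num), one_div]
  rw [(hasFDerivAt_leviCivita hv u).fderiv]
  simpa [hp, sub_eq_add_neg] using omegaStd_map_scaled h4v 4 (-(u / conj v ^ 2)) w₁ w₂
end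

section
/- Let ε ∈ (0,1/4) and let v, v̂ ∈ ℂ with |v|² < ε. Then |D²(|v|²/|2v²-1|)[v̂,v̂]| ≤ C'(ε + ε^{1/2})|v̂|² + 2(1+4ε)|v̂|² for some universal constant C' (all terms of the Hessian of |v|²/|2v²-1| except the term 2|v̂|²/|2v²-1| are bounded by a universal constant times ε^{1/2}|v̂|², using that each such term contains at least one extra factor of v). -/
/-!
Write the function as `‖w‖² φ w` with `φ w = ‖2w² - 1‖⁻¹`. The Leibniz rule gives
`D²(‖·‖² φ) v [h, h] = ‖v‖² D²φ v [h, h] + 4 ⟪v, h⟫ Dφ v [h] + 2 φ v ‖h‖²`.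
Since `φ` is smooth on a neighbourhood of the closed ball of radius `1/2`, its first two
derivatives are bounded there by compactness, so the first two terms are `O((ε + √ε) ‖h‖²)`,
while `φ v ≤ (1 - 2‖v‖²)⁻¹ ≤ 1 + 4ε`.
-/

open Complex Metric Filter Topology

section SecondDerivative

variable {𝕜 : Type*} [NontriviallyNormedField 𝕜] {E : Type*} [NormedAddCommGroup E]
  [NormedSpace 𝕜 E]

theorem fderiv_fderiv_mul_apply {f g : E → 𝕜} {x : E} (hf : ContDiffAt 𝕜 2 f x)
    (hg : ContDiffAt 𝕜 2 g x) (h k : E) :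
    fderiv 𝕜 (fderiv 𝕜 fun y => f y * g y) x h k =
      f x * fderiv 𝕜 (fderiv 𝕜 g) x h k + fderiv 𝕜 f x h * fderiv 𝕜 g x k
        + fderiv 𝕜 g x h * fderiv 𝕜 f x k + g x * fderiv 𝕜 (fderiv 𝕜 f) x h k := by
  have hf1 : ∀ᶠ y in 𝓝 x, DifferentiableAt 𝕜 f y :=
    (hf.eventually (by simp)).mono fun y hy => hy.differentiableAt two_ne_zero
  have hg1 : ∀ᶠ y in 𝓝 x, DifferentiableAt 𝕜 g y :=
    (hg.eventually (by simp)).mono fun y hy => hy.differentiableAt two_ne_zero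
  have hD : fderiv 𝕜 (fun y => f y * g y) =ᶠ[𝓝 x]
      fun y => f y • fderiv 𝕜 g y + g y • fderiv 𝕜 f y := by
    filter_upwards [hf1, hg1] with y hfy hgy using fderiv_fun_mul hfy hgy
  have hf2 : DifferentiableAt 𝕜 (fderiv 𝕜 f) x :=
    (hf.fderiv_right (m := 1) le_rfl).differentiableAt one_ne_zero
  have hg2 : DifferentiableAt 𝕜 (fderiv 𝕜 g) x :=
    (hg.fderiv_right (m := 1) le_rfl).differentiableAt one_ne_zero
  rw [hD.fderiv_eq, ((hf1.self_of_nhds.hasFDerivAt.fun_smul hg2.hasFDerivAt).fun_add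
    (hg1.self_of_nhds.hasFDerivAt.fun_smul hf2.hasFDerivAt)).fderiv]
  simp only [add_apply, smul_apply, ContinuousLinearMap.smulRight_apply, smul_eq_mul]
  ring

end SecondDerivative

section NormSq

variable {F : Type*} [NormedAddCommGroup F] [InnerProductSpace ℝ F]

theorem fderiv_fderiv_norm_sq_apply (x h k : F) :
    fderiv ℝ (fderiv ℝ fun y : F => ‖y‖ ^ 2) x h k = 2 * inner ℝ h k := by
  rw [fderiv_norm_sq, ← FunLike.coe_smul, ContinuousLinearMap.fderiv]
  simp only [smul_apply, nsmul_eq_mul, Nat.cast_ofNat]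
  rw [innerSL_apply_apply]

theorem abs_fderiv_fderiv_norm_sq_mul_le {φ : F → ℝ} {x : F} {C : ℝ} (hφ : ContDiffAt ℝ 2 φ x)
    (hDφ : ‖fderiv ℝ φ x‖ ≤ C) (hD2φ : ‖fderiv ℝ (fderiv ℝ φ) x‖ ≤ C) (h : F) :
    |fderiv ℝ (fderiv ℝ fun y => ‖y‖ ^ 2 * φ y) x h h|
      ≤ C * (‖x‖ ^ 2 + 4 * ‖x‖) * ‖h‖ ^ 2 + 2 * |φ x| * ‖h‖ ^ 2 := by
  have hA : |fderiv ℝ (fderiv ℝ φ) x h h| ≤ C * ‖h‖ ^ 2 :=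
    calc |fderiv ℝ (fderiv ℝ φ) x h h| ≤ ‖fderiv ℝ (fderiv ℝ φ) x‖ * ‖h‖ * ‖h‖ :=
          (fderiv ℝ (fderiv ℝ φ) x).le_opNorm₂ h h
      _ ≤ C * ‖h‖ ^ 2 := by rw [mul_assoc, ← sq]; gcongr
  have hB : |fderiv ℝ φ x h| ≤ C * ‖h‖ := ((fderiv ℝ φ x).le_opNorm h).trans (by gcongr)
  have hI : |inner ℝ x h| ≤ ‖x‖ * ‖h‖ := abs_real_inner_le_norm x h
  rw [fderiv_fderiv_mul_apply (contDiff_norm_sq ℝ).contDiffAt hφ, fderiv_fderiv_norm_sq_apply,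
    fderiv_norm_sq_apply]
  simp only [smul_apply, nsmul_eq_mul, Nat.cast_ofNat, innerSL_apply_apply,
    real_inner_self_eq_norm_sq]
  calc _ = |‖x‖ ^ 2 * fderiv ℝ (fderiv ℝ φ) x h h + 4 * (inner ℝ x h * fderiv ℝ φ x h)
          + 2 * φ x * ‖h‖ ^ 2| := by ring_nf
    _ ≤ ‖x‖ ^ 2 * |fderiv ℝ (fderiv ℝ φ) x h h| + 4 * (|inner ℝ x h| * |fderiv ℝ φ x h|)
          + 2 * |φ x| * ‖h‖ ^ 2 := by
        refine (abs_add_three _ _ _).trans_eq ?_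
        simp only [abs_mul, abs_pow, abs_norm, Nat.abs_ofNat]
    _ ≤ ‖x‖ ^ 2 * (C * ‖h‖ ^ 2) + 4 * ((‖x‖ * ‖h‖) * (C * ‖h‖)) + 2 * |φ x| * ‖h‖ ^ 2 := by
        gcongr
    _ = _ := by ring

end NormSq

theorem ContDiffOn.exists_bound_fderiv_fderiv {𝕜 E F : Type*} [NontriviallyNormedField 𝕜]
    [NormedAddCommGroup E] [NormedSpace 𝕜 E] [NormedAddCommGroup F] [NormedSpace 𝕜 F]
    {φ : E → F} {U K : Set E} (hφ : ContDiffOn 𝕜 2 φ U) (hU : IsOpen U) (hK : IsCompact K)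
    (hKU : K ⊆ U) :
    ∃ C > 0, ∀ x ∈ K, ‖fderiv 𝕜 φ x‖ ≤ C ∧ ‖fderiv 𝕜 (fderiv 𝕜 φ) x‖ ≤ C := by
  obtain ⟨C₁, hC₁⟩ := hK.exists_bound_of_continuousOn
    ((hφ.continuousOn_fderiv_of_isOpen hU one_le_two).mono hKU)
  obtain ⟨C₂, hC₂⟩ := hK.exists_bound_of_continuousOn
    (((hφ.fderiv_of_isOpen hU (m := 1) le_rfl).continuousOn_fderiv_of_isOpen hU le_rfl).mono hKU)
  refine ⟨max (max C₁ C₂) 1, by positivity, fun x hx => ⟨?_, ?_⟩⟩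
  · exact (hC₁ x hx).trans ((le_max_left _ _).trans (le_max_left _ _))
  · exact (hC₂ x hx).trans ((le_max_right _ _).trans (le_max_left _ _))

theorem one_sub_two_mul_norm_sq_le_norm (w : ℂ) : 1 - 2 * ‖w‖ ^ 2 ≤ ‖2 * w ^ 2 - 1‖ := by
  have h := norm_sub_norm_le (1 : ℂ) (2 * w ^ 2)
  rwa [norm_sub_rev, norm_one, norm_mul, norm_pow, Complex.norm_two] at h

theorem norm_two_mul_sq_sub_one_inv_le {w : ℂ} (hw : ‖w‖ ^ 2 ≤ 1 / 4) :
    ‖2 * w ^ 2 - 1‖⁻¹ ≤ 1 + 4 * ‖w‖ ^ 2 := by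
  have hpos : 0 < 1 - 2 * ‖w‖ ^ 2 := by linarith
  calc ‖2 * w ^ 2 - 1‖⁻¹ ≤ (1 - 2 * ‖w‖ ^ 2)⁻¹ :=
        inv_anti₀ hpos (one_sub_two_mul_norm_sq_le_norm w)
    _ ≤ 1 + 4 * ‖w‖ ^ 2 := by
        rw [inv_le_iff_one_le_mul₀ hpos]
        nlinarith [sq_nonneg ‖w‖]

theorem hessian_error_terms_bound :
    ∃ C' : ℝ, 0 < C' ∧ ∀ (ε : ℝ) (v vh : ℂ), ε ∈ Set.Ioo (0 : ℝ) (1 / 4) →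
      ‖v‖ ^ 2 < ε →
      |fderiv ℝ (fderiv ℝ (fun w : ℂ => ‖w‖ ^ 2 / ‖2 * w ^ 2 - 1‖)) v vh vh|
        ≤ C' * (ε + Real.sqrt ε) * ‖vh‖ ^ 2 + 2 * (1 + 4 * ε) * ‖vh‖ ^ 2 := by
  set U : Set ℂ := {w | 2 * w ^ 2 - 1 ≠ 0}
  have hU : IsOpen U := isOpen_ne_fun (by fun_prop) continuous_const
  have hφ : ContDiffOn ℝ 2 (fun w : ℂ => ‖2 * w ^ 2 - 1‖⁻¹) U := fun w hw =>
    (((by fun_prop : ContDiff ℝ 2 fun w : ℂ => 2 * w ^ 2 - 1).contDiffAt.norm ℝ hw).inv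
      (norm_ne_zero_iff.2 hw)).contDiffWithinAt
  have hKU : closedBall (0 : ℂ) (1 / 2) ⊆ U := fun w hw hw0 => by
    have := one_sub_two_mul_norm_sq_le_norm w
    rw [mem_closedBall_zero_iff] at hw
    rw [hw0, norm_zero] at this
    nlinarith [norm_nonneg w]
  obtain ⟨C, hC0, hC⟩ := hφ.exists_bound_fderiv_fderiv hU (isCompact_closedBall 0 (1 / 2)) hKU
  refine ⟨4 * C, by positivity, fun ε v vh ⟨hε0, hε⟩ hv => ?_⟩
  have hvε : ‖v‖ ≤ √ε := Real.le_sqrt_of_sq_le hv.le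
  have hvK : v ∈ closedBall (0 : ℂ) (1 / 2) := mem_closedBall_zero_iff.2 (by nlinarith)
  obtain ⟨hD1, hD2⟩ := hC v hvK
  have hφv : |‖2 * v ^ 2 - 1‖⁻¹| ≤ 1 + 4 * ε := by
    rw [abs_of_nonneg (by positivity)]
    linarith [norm_two_mul_sq_sub_one_inv_le (w := v) (by linarith)]
  simp only [div_eq_mul_inv]
  calc _ ≤ C * (‖v‖ ^ 2 + 4 * ‖v‖) * ‖vh‖ ^ 2 + 2 * |‖2 * v ^ 2 - 1‖⁻¹| * ‖vh‖ ^ 2 :=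
        abs_fderiv_fderiv_norm_sq_mul_le (hφ.contDiffAt (hU.mem_nhds (hKU hvK))) hD1 hD2 vh
    _ ≤ C * (ε + 4 * √ε) * ‖vh‖ ^ 2 + 2 * (1 + 4 * ε) * ‖vh‖ ^ 2 := by gcongr
    _ ≤ 4 * C * (ε + √ε) * ‖vh‖ ^ 2 + 2 * (1 + 4 * ε) * ‖vh‖ ^ 2 := by
        gcongr ?_ * _ + _
        nlinarith
end
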